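/- With D_j(a,b) as the Hankel minor defined by deleting column j from the Hankel matrix on μ(a),...,μ(2b-a-1), Cigler's conjecture is equivalent to: det(D_j(0,i+m))_{i,j=0}^{n-1} = D_{m+n}(n,m+n) · ∏_{i=1}^{n-1} D_{m+i}(0,m+i), for all m,n ≥ 1. -/

import Mathlib

/-- `Dm μ a b j` : determinant of the `(b-a)×(b-a)` Hankel-type matrix on
`μ a, …, μ b` with the column containing `μ j` (in the top row) deleted;
`0` if `j < a` or `j > b`. -/
def Dm {R : Type*} [CommRing R] (μ : ℕ → R) (a b j : ℕ) : R :=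
  if a ≤ j ∧ j ≤ b then
    Matrix.det (Matrix.of fun r c : Fin (b - a) =>
      μ (a + (r : ℕ) + (if (c : ℕ) < j - a then (c : ℕ) else (c : ℕ) + 1)))
  else 0

/-!
Write `H_N = det (μ (r + s))_{r,s<N}` and `N = m + n`. Let `U` have as rows the unit vectors
`e_{n+k}` (`k < m`) and the signed cofactor rows `((-1)^{m+i+c} D_c(0,m+i))_c` (`i < n`) of
the last row of the Hankel matrix of size `m + i + 1`. By Laplace expansion, the cofactor row
of index `b` paired with the column `(μ (c + s))_c` gives `0` for `s < b` and `H_{b+1}` for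
`s = b`, so `U H` is block triangular with diagonal blocks of determinants `D_N(n,N)` and
`H_{m+1} ⋯ H_{m+n}`. Writing `U H = (U P) (P⁻¹ H)` with `P` the rotation `x ↦ x + n` of the
`N` columns (sign `(-1)^{mn}`), `U P` is block triangular of determinant
`(-1)^{mn} det (D_j(0,i+m))`. Hence `det (D_j(0,i+m)) · H_N = D_N(n,N) · ∏_{i=1}^{n} H_{m+i}`.
For indeterminate moments `H_N ≠ 0` (at power sums it is the square of a Vandermonde
determinant), so `H_N` cancels there, and the identity specialises to any `μ`.
-/

open Matrix Finset

lemma val_succAbove {b : ℕ} (j : Fin (b + 1)) (c : Fin b) :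
    (j.succAbove c : ℕ) = if (c : ℕ) < j then (c : ℕ) else c + 1 := by
  simp only [Fin.succAbove, Fin.lt_def, Fin.val_castSucc]
  split_ifs <;> simp

lemma val_finRotate_pow_apply {N : ℕ} (k : ℕ) (x : Fin N) :
    ((finRotate N ^ k) x : ℕ) = (x + k) % N := by
  induction k with
  | zero => simp [Nat.mod_eq_of_lt x.isLt]
  | succ k ih =>
    have := x.neZero
    rw [pow_succ', Equiv.Perm.mul_apply, finRotate_apply, Fin.val_add, ih, Fin.val_one',
      Nat.add_mod_mod, Nat.mod_add_mod, add_assoc]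

lemma finAddFlip_trans_finCongr_eq_finRotate_pow (m n : ℕ) :
    (finAddFlip.trans (finCongr (add_comm n m)) : Equiv.Perm (Fin (m + n))) =
      finRotate (m + n) ^ n := by
  ext ⟨x, hx⟩
  rw [val_finRotate_pow_apply]
  rcases lt_or_ge x m with hxm | hxm
  · rw [Equiv.trans_apply, finAddFlip_apply_mk_left hxm, finCongr_apply, Fin.val_cast]
    dsimp only
    rw [Nat.mod_eq_of_lt (by omega), add_comm]
  · rw [Equiv.trans_apply, finAddFlip_apply_mk_right hxm, finCongr_apply, Fin.val_cast,
      show x + n = x - m + (m + n) by omega, Nat.add_mod_right, Nat.mod_eq_of_lt (by omega)]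

lemma sign_finAddFlip_trans_finCongr (m n : ℕ) :
    Equiv.Perm.sign (finAddFlip.trans (finCongr (add_comm n m)) : Equiv.Perm (Fin (m + n))) =
      (-1) ^ (m * n) := by
  rw [finAddFlip_trans_finCongr_eq_finRotate_pow, map_pow, sign_finRotate, ← pow_mul]
  refine neg_one_pow_congr ?_
  rcases n with _ | n
  · simp
  · rw [show m + (n + 1) - 1 = m + n by omega]
    simp only [Nat.even_mul, Nat.even_add, Nat.even_add_one]
    tauto

section

variable {R : Type*} [CommRing R] (μ : ℕ → R)

def hankel (N : ℕ) : Matrix (Fin N) (Fin N) R :=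
  of fun i j => μ (i + j)

lemma Dm_eq_zero_of_lt {a b j : ℕ} (h : b < j) : Dm μ a b j = 0 :=
  if_neg (by omega)

lemma Dm_zero_eq_det_submatrix {b : ℕ} (j : Fin (b + 1)) :
    Dm μ 0 b j = det ((hankel μ (b + 1)).submatrix Fin.castSucc j.succAbove) := by
  rw [Dm, if_pos ⟨Nat.zero_le _, Fin.is_le j⟩]
  congr 1
  ext r c
  simp [hankel, val_succAbove]

lemma Dm_add_self (a k : ℕ) :
    Dm μ a (a + k) (a + k) = det (hankel (fun i => μ (a + i)) k) := by
  rw [Dm, if_pos ⟨by omega, le_rfl⟩,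
    ← det_submatrix_equiv_self (finCongr (Nat.add_sub_cancel_left (n := a) (m := k)).symm)]
  congr 1
  ext r c
  simp [hankel, add_assoc]

lemma Dm_zero_self (N : ℕ) : Dm μ 0 N N = det (hankel μ N) := by
  simpa using Dm_add_self μ 0 N

lemma Dm_map {S : Type*} [CommRing S] (φ : R →+* S) (a b j : ℕ) :
    φ (Dm μ a b j) = Dm (φ ∘ μ) a b j := by
  unfold Dm
  split_ifs
  · exact RingHom.map_det φ _
  · exact map_zero φ

lemma sum_cofactor_mul_eq_det_updateRow (b t : ℕ) :
    ∑ c ∈ range (b + 1), (-1) ^ (b + c) * Dm μ 0 b c * μ (c + t) =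
      det (updateRow (hankel μ (b + 1)) (Fin.last b) fun c => μ (c + t)) := by
  rw [det_succ_row _ (Fin.last b), ← Fin.sum_univ_eq_sum_range]
  refine sum_congr rfl fun j _ => ?_
  rw [Dm_zero_eq_det_submatrix, Fin.succAbove_last, Fin.val_last, updateRow_self]
  have hminor : (updateRow (hankel μ (b + 1)) (Fin.last b) fun c => μ (c + t)).submatrix
      Fin.castSucc j.succAbove = (hankel μ (b + 1)).submatrix Fin.castSucc j.succAbove := by
    ext r c
    simp
  rw [hminor]
  ring

lemma sum_cofactor_mul_of_lt {b t : ℕ} (ht : t < b) :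
    ∑ c ∈ range (b + 1), (-1) ^ (b + c) * Dm μ 0 b c * μ (c + t) = 0 := by
  have hne : (⟨t, by omega⟩ : Fin (b + 1)) ≠ Fin.last b := Fin.ne_of_lt ht
  rw [sum_cofactor_mul_eq_det_updateRow]
  refine det_zero_of_row_eq hne (funext fun c => ?_)
  simp [updateRow_ne hne, hankel, add_comm]

lemma sum_cofactor_mul_self (b : ℕ) :
    ∑ c ∈ range (b + 1), (-1) ^ (b + c) * Dm μ 0 b c * μ (c + b) =
      Dm μ 0 (b + 1) (b + 1) := by
  rw [sum_cofactor_mul_eq_det_updateRow, Dm_zero_self]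
  convert congrArg det (updateRow_eq_self (hankel μ (b + 1)) (Fin.last b)) using 4
  simp [hankel, add_comm]

def cofactorRows (m n : ℕ) : Matrix (Fin m ⊕ Fin n) (Fin (m + n)) R :=
  of <| Sum.elim (fun k => Pi.single ⟨n + k, by omega⟩ 1)
    (fun i c => (-1) ^ (m + i + c) * Dm μ 0 (m + i) c)

lemma cofactorRows_mul_hankel_inl {m n : ℕ} (k : Fin m) (s : Fin (m + n)) :
    (cofactorRows μ m n * hankel μ (m + n)) (.inl k) s = μ (n + k + s) := by
  simp [cofactorRows, mul_apply, hankel, Pi.single_apply]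

lemma cofactorRows_mul_hankel_inr {m n : ℕ} (i : Fin n) (s : Fin (m + n)) :
    (cofactorRows μ m n * hankel μ (m + n)) (.inr i) s =
      ∑ c ∈ range (m + i + 1), (-1) ^ (m + i + c) * Dm μ 0 (m + i) c * μ (c + s) := by
  simp only [cofactorRows, hankel, mul_apply, of_apply, Sum.elim_inr]
  rw [Fin.sum_univ_eq_sum_range (fun c => (-1) ^ (m + i + c) * Dm μ 0 (m + i) c * μ (c + s))]
  refine (sum_subset (range_subset_range.mpr (by omega)) fun c _ hc => ?_).symm
  rw [Dm_eq_zero_of_lt μ (by simpa using hc), mul_zero, zero_mul]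

lemma det_cofactorRows_mul_hankel (m n : ℕ) :
    det ((cofactorRows μ m n * hankel μ (m + n)).submatrix id finSumFinEquiv) =
      det (hankel (fun k => μ (n + k)) m) * ∏ i : Fin n, Dm μ 0 (m + i + 1) (m + i + 1) := by
  set P := (cofactorRows μ m n * hankel μ (m + n)).submatrix id finSumFinEquiv
  have h21 : P.toBlocks₂₁ = 0 := by
    ext i j
    simp only [P, toBlocks₂₁, of_apply, submatrix_apply, id, cofactorRows_mul_hankel_inr]
    exact sum_cofactor_mul_of_lt μ (by simp; omega)
  have h11 : P.toBlocks₁₁ = hankel (fun k => μ (n + k)) m := by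
    ext k j
    simp only [P, toBlocks₁₁, of_apply, submatrix_apply, id, cofactorRows_mul_hankel_inl]
    simp [hankel, add_assoc]
  have h22 : P.toBlocks₂₂.IsUpperTriangular := by
    intro i j hji
    simp only [P, toBlocks₂₂, of_apply, submatrix_apply, id, cofactorRows_mul_hankel_inr]
    exact sum_cofactor_mul_of_lt μ (by simpa using hji)
  rw [← fromBlocks_toBlocks P, h21, det_fromBlocks_zero₂₁, h11, det_of_isUpperTriangular h22]
  congr 1
  refine prod_congr rfl fun i _ => ?_
  simp only [P, toBlocks₂₂, of_apply, submatrix_apply, id, cofactorRows_mul_hankel_inr]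
  simpa using sum_cofactor_mul_self μ (m + i)

lemma det_cofactorRows_submatrix (m n : ℕ) :
    det ((cofactorRows μ m n).submatrix id
        (finSumFinEquiv.trans (finAddFlip.trans (finCongr (add_comm n m))))) =
      (-1) ^ (m * n) * det (of fun i j : Fin n => Dm μ 0 (i + m) j) := by
  set U := (cofactorRows μ m n).submatrix id
    (finSumFinEquiv.trans (finAddFlip.trans (finCongr (add_comm n m))))
  set L := of fun i j : Fin n => Dm μ 0 (i + m) j
  have h11 : U.toBlocks₁₁ = 1 := by
    ext k j
    simp [U, toBlocks₁₁, cofactorRows, Pi.single_apply, one_apply, Fin.ext_iff, add_comm,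
      eq_comm]
  have h12 : U.toBlocks₁₂ = 0 := by
    ext k i
    simp [U, toBlocks₁₂, cofactorRows, Pi.single_apply, Fin.ext_iff]
    omega
  have h22 : U.toBlocks₂₂ = diagonal (fun i : Fin n => (-1) ^ (m + i : ℕ)) * L *
      diagonal (fun j : Fin n => (-1) ^ (j : ℕ)) := by
    ext i j
    simp [U, L, toBlocks₂₂, cofactorRows, pow_add, add_comm]
    ring
  have hsign : ∀ i : Fin n, (-1 : R) ^ (m + i : ℕ) * (-1) ^ (i : ℕ) = (-1) ^ m := fun i => by
    rw [← pow_add, add_assoc, pow_add, ← two_mul, pow_mul, neg_one_sq, one_pow, mul_one]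
  rw [← fromBlocks_toBlocks U, h12, det_fromBlocks_zero₁₂, h11, det_one, one_mul, h22, det_mul,
    det_mul, det_diagonal, det_diagonal, mul_right_comm, ← prod_mul_distrib,
    prod_congr rfl fun i _ => hsign i, prod_const, card_univ, Fintype.card_fin, pow_mul]

theorem det_Dm_mul_det_hankel (m n : ℕ) :
    det (of fun i j : Fin n => Dm μ 0 (i + m) j) * det (hankel μ (m + n)) =
      det (hankel (fun k => μ (n + k)) m) * ∏ i : Fin n, Dm μ 0 (m + i + 1) (m + i + 1) := by
  set ρ : Equiv.Perm (Fin (m + n)) := finAddFlip.trans (finCongr (add_comm n m))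
  set e : Fin m ⊕ Fin n ≃ Fin (m + n) := finSumFinEquiv
  set H := hankel μ (m + n)
  have hH : det (H.submatrix (e.trans ρ) e) = (-1) ^ (m * n) * det H := by
    rw [show H.submatrix (e.trans ρ) e = (H.submatrix ρ id).submatrix e e from rfl,
      det_submatrix_equiv_self, det_permute, sign_finAddFlip_trans_finCongr]
    simp
  have hsq : ((-1 : R) ^ (m * n)) * (-1) ^ (m * n) = 1 := by
    rw [← pow_add, Even.neg_one_pow ⟨_, rfl⟩]
  rw [← det_cofactorRows_mul_hankel, ← submatrix_mul_equiv _ _ _ (e.trans ρ), det_mul,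
    det_cofactorRows_submatrix, hH]
  linear_combination -(det (of fun i j : Fin n => Dm μ 0 (i + m) j) * det H) * hsq

end

open MvPolynomial in
lemma det_hankel_X_ne_zero (N : ℕ) : det (hankel (X : ℕ → MvPolynomial ℕ ℤ) N) ≠ 0 := by
  intro h
  set v : Fin N → ℤ := fun t => t
  have hvdm : (eval fun k => ∑ t, v t ^ k).mapMatrix (hankel X N) =
      (vandermonde v)ᵀ * vandermonde v := by
    ext r c
    simp [hankel, vandermonde_transpose_mul_vandermonde]
  have h0 := congrArg (eval fun k => ∑ t, v t ^ k) h
  rw [RingHom.map_det, map_zero, hvdm, det_mul, det_transpose, mul_self_eq_zero] at h0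
  exact det_vandermonde_ne_zero_iff.mpr (fun s t hst => Fin.ext (by simpa [v] using hst)) h0

open MvPolynomial in
lemma det_Dm_X (m k : ℕ) :
    det (of fun i j : Fin (k + 1) => Dm (X : ℕ → MvPolynomial ℕ ℤ) 0 (i + m) j) =
      Dm X (k + 1) (m + (k + 1)) (m + (k + 1)) * ∏ i ∈ Icc 1 k, Dm X 0 (m + i) (m + i) := by
  refine mul_right_cancel₀ (det_hankel_X_ne_zero (m + (k + 1))) ?_
  have hprod : ∏ i : Fin k, Dm (X : ℕ → MvPolynomial ℕ ℤ) 0 (m + (i + 1)) (m + (i + 1)) =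
      ∏ i ∈ Icc 1 k, Dm X 0 (m + i) (m + i) := by
    rw [Fin.prod_univ_eq_prod_range (fun i => Dm X 0 (m + (i + 1)) (m + (i + 1))), range_eq_Ico,
      prod_Ico_add' (fun i => Dm X 0 (m + i) (m + i)), zero_add, Ico_add_one_right_eq_Icc]
  rw [det_Dm_mul_det_hankel, Fin.prod_univ_castSucc, ← Dm_add_self, add_comm (k + 1) m,
    ← Dm_zero_self]
  simp only [Fin.val_castSucc, Fin.val_last, add_assoc, hprod]
  ring

theorem cigler_conjecture_minor_form_general {R : Type*} [CommRing R] (μ : ℕ → R)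
    (m n : ℕ) (hn : 1 ≤ n) :
    Matrix.det (Matrix.of fun i j : Fin n => Dm μ 0 ((i : ℕ) + m) (j : ℕ)) =
      Dm μ n (m + n) (m + n) * ∏ i ∈ Finset.Icc 1 (n - 1), Dm μ 0 (m + i) (m + i) := by
  obtain ⟨k, rfl⟩ : ∃ k, n = k + 1 := ⟨n - 1, by omega⟩
  have h := congrArg (MvPolynomial.eval₂Hom (Int.castRingHom R) μ) (det_Dm_X m k)
  have hμ : MvPolynomial.eval₂Hom (Int.castRingHom R) μ ∘ MvPolynomial.X = μ :=
    funext (MvPolynomial.eval₂Hom_X' _ μ)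
  simp only [RingHom.map_det, map_mul, map_prod, Dm_map, RingHom.mapMatrix_apply, Matrix.map,
    of_apply, hμ] at h
  simpa using h

theorem cigler_conjecture_minor_form {R : Type*} [CommRing R] (μ : ℕ → R)
    (m n : ℕ) (hm : 1 ≤ m) (hn : 1 ≤ n) :
    Matrix.det (Matrix.of fun i j : Fin n => Dm μ 0 ((i : ℕ) + m) (j : ℕ)) =
      Dm μ n (m + n) (m + n) * ∏ i ∈ Finset.Icc 1 (n - 1), Dm μ 0 (m + i) (m + i) :=
  cigler_conjecture_minor_form_general μ m n hn
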